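/- arXiv:1101.3594 — 3 statements merged into one kernel-verified Lean document; each statement's English description precedes it below -/
import Mathlib

section
/- Let η, η^H be measurable functions with values in [-1/2, 1/2], let α : 𝒳 → [0,1), and let η̃ = (1-α)η + α·η^H pointwise. If at a point x one has η(x)·η̃(x) < 0, then 2|η(x)| ≤ α(x)/(1 - α(x)). In particular, in the contamination model with α_ε(x) = ε·h(x)/((1-ε)g(x) + ε·h(x)), the condition η(x)·η̃(x) < 0 implies 2|η(x)| ≤ (ε/(1-ε))·(h(x)/g(x)). -/
/-
If `η(x)` and the mixture `η̃(x) = (1-α)η(x) + α ηᴴ(x)` have opposite signs, the contaminating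
term `α ηᴴ(x)`, of size at most `α/2`, must outweigh `(1-α)|η(x)|`; hence `2|η(x)| ≤ α/(1-α)`.
For the contamination weight `α_ε = εh/((1-ε)g + εh)` one has `α_ε/(1-α_ε) = (ε/(1-ε))(h/g)`.
-/

open MeasureTheory Filter

/-- sign function: 1 if t > 0, -1 otherwise. -/
noncomputable def sgn (t : ℝ) : ℝ := if 0 < t then 1 else -1

/-- Risk under 0-1 loss of the decision rule `1_{f(X)>0}` when `(X,Y) ~ P`,
    labels encoded as `Bool` (`true` = 1): `R(f) = P(Y ≠ 1_{f(X)>0})`. -/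
noncomputable def risk {𝒳 : Type*} [MeasurableSpace 𝒳]
    (P : Measure (𝒳 × Bool)) (f : 𝒳 → ℝ) : ℝ :=
  (P {q | (q.2 = true) ≠ (0 < f q.1)}).toReal

/-- `η` is the Bayes decision function of the joint distribution `P` of `(X,Y)`:
    `η(x) = P(Y=1 | X=x) - 1/2`, i.e. `η` is measurable, takes values in `[-1/2,1/2]`,
    and `∫_A (η + 1/2) dP_X = P(A × {1})` for all measurable `A`. -/
def IsBayesDecisionFunction {𝒳 : Type*} [MeasurableSpace 𝒳]
    (P : Measure (𝒳 × Bool)) (η : 𝒳 → ℝ) : Prop :=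
  Measurable η ∧ (∀ x, η x ∈ Set.Icc (-(1/2) : ℝ) (1/2)) ∧
    ∀ A : Set 𝒳, MeasurableSet A →
      ∫ x in A, (η x + 1/2) ∂(P.map Prod.fst) = (P (A ×ˢ ({true} : Set Bool))).toReal

/-- The contaminated distribution `G̃ = (1-ε)G + εH`. -/
noncomputable def contaminate {Ω : Type*} [MeasurableSpace Ω]
    (G H : Measure Ω) (ε : ℝ) : Measure Ω :=
  ENNReal.ofReal (1 - ε) • G + ENNReal.ofReal ε • H

lemma two_mul_one_sub_mul_lt_of_mixture_neg {a e f : ℝ} (ha : 0 ≤ a) (hf : -(1/2) ≤ f)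
    (hmix : (1 - a) * e + a * f < 0) : 2 * ((1 - a) * e) < a := by
  linarith [mul_le_mul_of_nonneg_left hf ha]

lemma two_mul_abs_le_div_one_sub_of_mul_mixture_neg {a e f : ℝ} (ha : a ∈ Set.Ico (0 : ℝ) 1)
    (hf : f ∈ Set.Icc (-(1/2) : ℝ) (1/2)) (hneg : e * ((1 - a) * e + a * f) < 0) :
    2 * |e| ≤ a / (1 - a) := by
  rw [le_div_iff₀ (sub_pos.mpr ha.2)]
  rcases mul_neg_iff.mp hneg with ⟨he, hmix⟩ | ⟨he, hmix⟩
  · have := two_mul_one_sub_mul_lt_of_mixture_neg ha.1 hf.1 hmix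
    rw [abs_of_pos he]
    linarith
  · have := two_mul_one_sub_mul_lt_of_mixture_neg (e := -e) (f := -f) ha.1
      (by linarith [hf.2]) (by linarith)
    rw [abs_of_neg he]
    linarith

noncomputable def contaminationWeight (ε g h : ℝ) : ℝ := ε * h / ((1 - ε) * g + ε * h)

section contaminationWeight

variable {ε g h : ℝ}

lemma contaminationWeight_denom_pos (hε₀ : 0 ≤ ε) (hε₁ : ε < 1) (hg : 0 < g) (hh : 0 ≤ h) :
    0 < (1 - ε) * g + ε * h := by
  have := mul_pos (sub_pos.mpr hε₁) hg
  positivity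

lemma contaminationWeight_mem_Ico (hε₀ : 0 ≤ ε) (hε₁ : ε < 1) (hg : 0 < g) (hh : 0 ≤ h) :
    contaminationWeight ε g h ∈ Set.Ico (0 : ℝ) 1 := by
  have hD := contaminationWeight_denom_pos hε₀ hε₁ hg hh
  refine ⟨div_nonneg (mul_nonneg hε₀ hh) hD.le, (div_lt_one hD).mpr ?_⟩
  nlinarith [mul_pos (sub_pos.mpr hε₁) hg]

lemma contaminationWeight_div_one_sub (hε₀ : 0 ≤ ε) (hε₁ : ε < 1) (hg : 0 < g) (hh : 0 ≤ h) :
    contaminationWeight ε g h / (1 - contaminationWeight ε g h) = ε / (1 - ε) * (h / g) := by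
  have hD := contaminationWeight_denom_pos hε₀ hε₁ hg hh
  have hε : 1 - ε ≠ 0 := (sub_pos.mpr hε₁).ne'
  unfold contaminationWeight
  rw [one_sub_div hD.ne', div_div_div_cancel_right₀ hD.ne', add_sub_cancel_right]
  field_simp

end contaminationWeight

theorem statement4_general {𝒳 : Type*} (η ηH : 𝒳 → ℝ)
    (hηH : ∀ x, ηH x ∈ Set.Icc (-(1/2) : ℝ) (1/2)) :
    (∀ (α ηt : 𝒳 → ℝ), (∀ x, α x ∈ Set.Ico (0 : ℝ) 1) →
      (∀ x, ηt x = (1 - α x) * η x + α x * ηH x) →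
      ∀ x, η x * ηt x < 0 → 2 * |η x| ≤ α x / (1 - α x)) ∧
    (∀ (ε : ℝ) (g h : 𝒳 → ℝ), 0 ≤ ε → ε < 1 → (∀ x, 0 ≤ h x) →
      ∀ ηt : 𝒳 → ℝ,
      (∀ x, ηt x = (1 - ε * h x / ((1 - ε) * g x + ε * h x)) * η x
          + (ε * h x / ((1 - ε) * g x + ε * h x)) * ηH x) →
      ∀ x, 0 < g x → η x * ηt x < 0 →
        2 * |η x| ≤ ε / (1 - ε) * (h x / g x)) := by
  refine ⟨fun α ηt hα hηt x hneg => ?_, fun ε g h hε₀ hε₁ hh ηt hηt x hg hneg => ?_⟩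
  · rw [hηt x] at hneg
    exact two_mul_abs_le_div_one_sub_of_mul_mixture_neg (hα x) (hηH x) hneg
  · rw [hηt x] at hneg
    rw [← contaminationWeight_div_one_sub hε₀ hε₁ hg (hh x)]
    exact two_mul_abs_le_div_one_sub_of_mul_mixture_neg
      (contaminationWeight_mem_Ico hε₀ hε₁ hg (hh x)) (hηH x) hneg

/-- Pointwise consequence of sign disagreement: if η(x)·η̃(x) < 0 for the mixture
η̃ = (1-α)η + α·η^H with α(x) ∈ [0,1), then 2|η(x)| ≤ α(x)/(1-α(x)); in particular,
for α = α_ε, it implies 2|η(x)| ≤ (ε/(1-ε))·(h(x)/g(x)). -/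
theorem statement4 {𝒳 : Type*} (η ηH : 𝒳 → ℝ)
    (hη : ∀ x, η x ∈ Set.Icc (-(1/2) : ℝ) (1/2))
    (hηH : ∀ x, ηH x ∈ Set.Icc (-(1/2) : ℝ) (1/2)) :
    (∀ (α ηt : 𝒳 → ℝ), (∀ x, α x ∈ Set.Ico (0 : ℝ) 1) →
      (∀ x, ηt x = (1 - α x) * η x + α x * ηH x) →
      ∀ x, η x * ηt x < 0 → 2 * |η x| ≤ α x / (1 - α x)) ∧
    (∀ (ε : ℝ) (g h : 𝒳 → ℝ), 0 ≤ ε → ε < 1 → (∀ x, 0 ≤ h x) →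
      ∀ ηt : 𝒳 → ℝ,
      (∀ x, ηt x = (1 - ε * h x / ((1 - ε) * g x + ε * h x)) * η x
          + (ε * h x / ((1 - ε) * g x + ε * h x)) * ηH x) →
      ∀ x, 0 < g x → η x * ηt x < 0 →
        2 * |η x| ≤ ε / (1 - ε) * (h x / g x)) :=
  statement4_general η ηH hηH
end

section
/- (Data contamination bound) Let G and H be joint distributions of (X,Y) on ℝ^p × {0,1} such that the X-marginal of G admits a density g, let 0 ≤ ε < 1, and let G̃ = (1-ε)G + εH. Let η and η̃ be the Bayes decision functions under G and G̃ respectively, let R denote risk with respect to G under 0-1 loss, and let R* be the Bayes risk under G. Then for any contaminating distribution H, the risk under G of the Bayes rule of the contaminated distribution satisfies R(η̃) - R* ≤ ε/(1-ε). -/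
/-!
The Bayes rule of `G̃` minimises the `G̃`-risk, and the `G̃`-risk of any rule is
`(1-ε) R_G + ε R_H`. Comparing `η̃` with `η` therefore gives
`(1-ε) (R_G(η̃) - R_G(η)) ≤ ε (R_H(η) - R_H(η̃)) ≤ ε`.
Bayes optimality comes from writing the risk of a rule `f` as the integral over the
`X`-marginal of its conditional error `1/2 ∓ η(x)` (sign according to `f(x) > 0`),
which `f = η` minimises pointwise.
-/

open MeasureTheory Filter

section BayesRisk

variable {𝒳 : Type*}

/-- `P(Y ≠ 1_{f(x)>0} | X = x)` when `η` is the Bayes decision function of `P`. -/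
noncomputable def condRisk (η f : 𝒳 → ℝ) (x : 𝒳) : ℝ :=
  if 0 < f x then 1/2 - η x else η x + 1/2

lemma condRisk_self_le (η f : 𝒳 → ℝ) (x : 𝒳) : condRisk η η x ≤ condRisk η f x := by
  unfold condRisk
  split_ifs <;> linarith

lemma abs_condRisk_le {η : 𝒳 → ℝ} (hη : ∀ x, η x ∈ Set.Icc (-(1/2) : ℝ) (1/2))
    (f : 𝒳 → ℝ) (x : 𝒳) : |condRisk η f x| ≤ 1 := by
  obtain ⟨hlo, hhi⟩ := hη x
  unfold condRisk
  split_ifs <;> rw [abs_le] <;> constructor <;> linarith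

variable [MeasurableSpace 𝒳]

lemma IsBayesDecisionFunction.integrable {P : Measure (𝒳 × Bool)} [IsFiniteMeasure P]
    {η : 𝒳 → ℝ} (hB : IsBayesDecisionFunction P η) : Integrable η (P.map Prod.fst) :=
  .of_bound hB.1.aestronglyMeasurable (1/2) (.of_forall fun x => abs_le.2 (hB.2.1 x))

lemma IsBayesDecisionFunction.integrable_condRisk {P : Measure (𝒳 × Bool)} [IsFiniteMeasure P]
    {η f : 𝒳 → ℝ} (hB : IsBayesDecisionFunction P η) (hf : Measurable f) :
    Integrable (condRisk η f) (P.map Prod.fst) :=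
  have hm : Measurable (condRisk η f) :=
    Measurable.ite (measurableSet_lt measurable_const hf)
      (measurable_const.sub hB.1) (hB.1.add measurable_const)
  .of_bound hm.aestronglyMeasurable 1 (.of_forall (abs_condRisk_le hB.2.1 f))

lemma map_fst_real_eq_add (P : Measure (𝒳 × Bool)) [IsFiniteMeasure P] {A : Set 𝒳}
    (hA : MeasurableSet A) :
    (P.map Prod.fst).real A = P.real (A ×ˢ {true}) + P.real (A ×ˢ {false}) := by
  have hsplit : Prod.fst ⁻¹' A = A ×ˢ ({true} : Set Bool) ∪ A ×ˢ {false} := by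
    ext ⟨x, b⟩; cases b <;> simp
  rw [measureReal_def, Measure.map_apply measurable_fst hA, hsplit, ← measureReal_def,
    measureReal_union _ (hA.prod (measurableSet_singleton false))]
  exact Set.disjoint_prod.2 (Or.inr (by simp))

lemma risk_eq_add (P : Measure (𝒳 × Bool)) [IsFiniteMeasure P] {f : 𝒳 → ℝ}
    (hf : Measurable f) :
    risk P f = P.real ({x | 0 < f x}ᶜ ×ˢ {true}) + P.real ({x | 0 < f x} ×ˢ {false}) := by
  have hA : MeasurableSet {x | 0 < f x} := measurableSet_lt measurable_const hf
  have hsplit : {q : 𝒳 × Bool | (q.2 = true) ≠ (0 < f q.1)}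
      = {x | 0 < f x}ᶜ ×ˢ {true} ∪ {x | 0 < f x} ×ˢ {false} := by
    ext ⟨x, b⟩; cases b <;> simp [eq_iff_iff]
  rw [risk, ← measureReal_def, hsplit,
    measureReal_union _ (hA.prod (measurableSet_singleton false))]
  exact Set.disjoint_prod.2 (Or.inl disjoint_compl_left)

lemma IsBayesDecisionFunction.risk_eq_integral {P : Measure (𝒳 × Bool)} [IsFiniteMeasure P]
    {η f : 𝒳 → ℝ} (hB : IsBayesDecisionFunction P η) (hf : Measurable f) :
    risk P f = ∫ x, condRisk η f x ∂(P.map Prod.fst) := by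
  classical
  set μ := P.map Prod.fst
  set A := {x | 0 < f x}
  have hA : MeasurableSet A := measurableSet_lt measurable_const hf
  have hIntOne : Integrable (fun x => η x + 1/2) μ := hB.integrable.add (integrable_const _)
  have hIntZero : Integrable (fun x => 1/2 - η x) μ := (integrable_const _).sub hB.integrable
  have hcond : condRisk η f = A.piecewise (fun x => 1/2 - η x) (fun x => η x + 1/2) := rfl
  have hsub : ∫ x in A, (1/2 - η x) ∂μ = μ.real A - ∫ x in A, (η x + 1/2) ∂μ := by
    rw [← mul_one (μ.real A), ← smul_eq_mul, ← setIntegral_const,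
      ← integral_sub (integrable_const _) hIntOne.integrableOn]
    congr 1 with x; ring
  rw [hcond, integral_piecewise hA hIntZero.integrableOn hIntOne.integrableOn, hsub,
    hB.2.2 A hA, hB.2.2 Aᶜ hA.compl, map_fst_real_eq_add P hA, risk_eq_add P hf]
  simp only [measureReal_def]
  ring

lemma IsBayesDecisionFunction.risk_le {P : Measure (𝒳 × Bool)} [IsFiniteMeasure P]
    {η f : 𝒳 → ℝ} (hB : IsBayesDecisionFunction P η) (hf : Measurable f) :
    risk P η ≤ risk P f := by
  rw [hB.risk_eq_integral hB.1, hB.risk_eq_integral hf]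
  exact integral_mono (hB.integrable_condRisk hB.1) (hB.integrable_condRisk hf)
    (condRisk_self_le η f)

end BayesRisk

instance isFiniteMeasure_contaminate {Ω : Type*} [MeasurableSpace Ω] (G H : Measure Ω) [IsFiniteMeasure G]
    [IsFiniteMeasure H] (ε : ℝ) : IsFiniteMeasure (contaminate G H ε) :=
  ⟨by simp [contaminate, ENNReal.mul_lt_top, measure_lt_top]⟩

lemma risk_contaminate {𝒳 : Type*} [MeasurableSpace 𝒳]
    (G H : Measure (𝒳 × Bool)) [IsFiniteMeasure G] [IsFiniteMeasure H]
    {ε : ℝ} (hε : 0 ≤ ε) (hε1 : ε ≤ 1) (f : 𝒳 → ℝ) :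
    risk (contaminate G H ε) f = (1 - ε) * risk G f + ε * risk H f := by
  rw [risk, risk, risk, contaminate, Measure.add_apply, Measure.smul_apply, Measure.smul_apply,
    smul_eq_mul, smul_eq_mul, ENNReal.toReal_add (by finiteness) (by finiteness),
    ENNReal.toReal_mul, ENNReal.toReal_mul, ENNReal.toReal_ofReal (sub_nonneg.2 hε1),
    ENNReal.toReal_ofReal hε]

theorem statement6_general {p : ℕ}
    (G H : Measure ((Fin p → ℝ) × Bool))
    [IsProbabilityMeasure G] [IsProbabilityMeasure H]
    (ε : ℝ) (hε : 0 ≤ ε) (hε1 : ε < 1)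
    (η ηt : (Fin p → ℝ) → ℝ)
    (hη : IsBayesDecisionFunction G η)
    (hηt : IsBayesDecisionFunction (contaminate G H ε) ηt) :
    risk G ηt - risk G η ≤ ε / (1 - ε) := by
  have hopt := hηt.risk_le hη.1
  rw [risk_contaminate G H hε hε1.le, risk_contaminate G H hε hε1.le] at hopt
  have hHη : risk H η ≤ 1 := measureReal_le_one
  have hHηt : 0 ≤ risk H ηt := ENNReal.toReal_nonneg
  rw [le_div_iff₀ (sub_pos.2 hε1)]
  linarith [mul_le_of_le_one_right hε hHη, mul_nonneg hε hHηt]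

/-- Theorem 1 (data contamination bound): if the X-marginal of G has a density g,
then for any contaminating distribution H, R(η̃) - R* ≤ ε/(1-ε). -/
theorem statement6 {p : ℕ}
    (G H : Measure ((Fin p → ℝ) × Bool))
    [IsProbabilityMeasure G] [IsProbabilityMeasure H]
    (g : (Fin p → ℝ) → ℝ)
    (hGg : G.map Prod.fst = volume.withDensity fun x => ENNReal.ofReal (g x))
    (ε : ℝ) (hε : 0 ≤ ε) (hε1 : ε < 1)
    (η ηt : (Fin p → ℝ) → ℝ)
    (hη : IsBayesDecisionFunction G η)
    (hηt : IsBayesDecisionFunction (contaminate G H ε) ηt) :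
    risk G ηt - risk G η ≤ ε / (1 - ε) :=
  statement6_general G H ε hε hε1 η ηt hη hηt
end

section
/- Let (X,Y) have joint distribution P on 𝒳 × {0,1} with Bayes decision function η satisfying P(η(X)=0) = 0, and let (f_n) be a sequence of measurable decision functions whose risks converge to the Bayes risk, R(f_n) → R*. Then the induced decision rules converge to the Bayes rule in probability: P( 1_{f_n(X)>0} ≠ 1_{η(X)>0} ) → 0 as n → ∞. -/
open MeasureTheory Filter

/-!
With `μ` the law of `X`, the excess risk of a decision function `g` is
`R(g) - R* = ∫_{D_g} 2|η| dμ`, where `D_g` is the set on which the rules of `g` and `η` disagree.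
Hence `∫_{D_{f_n}} 2|η| dμ → 0`. Since `η ≠ 0` almost everywhere, `μ {|η| < δ}` is small for
small `δ`, and Markov's inequality bounds `μ (D_{f_n} ∩ {|η| ≥ δ})` by `δ⁻¹ ∫_{D_{f_n}} |η| dμ`.
-/

open scoped ENNReal Topology

section SetLIntegral

variable {α : Type*} [MeasurableSpace α] {μ : Measure α} {h : α → ℝ≥0∞}

theorem tendsto_measure_lt_inv_natCast [IsFiniteMeasure μ] (hm : AEMeasurable h μ)
    (h0 : ∀ᵐ x ∂μ, h x ≠ 0) :
    Tendsto (fun k : ℕ => μ {x | h x < (k : ℝ≥0∞)⁻¹}) atTop (𝓝 0) := by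
  have hinter : ⋂ k : ℕ, {x | h x < (k : ℝ≥0∞)⁻¹} = {x | h x = 0} := by
    ext x
    simp only [Set.mem_iInter, Set.mem_ofPred_eq]
    refine ⟨fun hx => by_contra fun hne => ?_, fun hx k => by simp [hx]⟩
    obtain ⟨k, hk⟩ := ENNReal.exists_inv_nat_lt hne
    exact (hx k).not_gt hk
  have hanti : Antitone fun k : ℕ => {x | h x < (k : ℝ≥0∞)⁻¹} := fun i j hij x hx =>
    lt_of_lt_of_le hx (ENNReal.inv_le_inv.2 (Nat.cast_le.2 hij))
  have := tendsto_measure_iInter_atTop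
    (fun k => nullMeasurableSet_lt hm aemeasurable_const) hanti ⟨0, measure_ne_top μ _⟩
  have hnull : μ {x | h x = 0} = 0 := by simpa only [ne_eq, not_not] using ae_iff.1 h0
  rwa [hinter, hnull] at this

theorem tendsto_measure_of_tendsto_setLIntegral [IsFiniteMeasure μ] (hm : AEMeasurable h μ)
    (h0 : ∀ᵐ x ∂μ, h x ≠ 0) {ι : Type*} {l : Filter ι} {D : ι → Set α}
    (hD : Tendsto (fun i => ∫⁻ x in D i, h x ∂μ) l (𝓝 0)) :
    Tendsto (fun i => μ (D i)) l (𝓝 0) := by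
  refine ENNReal.tendsto_nhds_zero.2 fun ε hε => ?_
  have hε2 : ε / 2 ≠ 0 := (ENNReal.half_pos hε.ne').ne'
  obtain ⟨k, hk, hk1⟩ := (((tendsto_measure_lt_inv_natCast hm h0).eventually_lt_const
    (pos_iff_ne_zero.2 hε2)).and (eventually_ge_atTop 1)).exists
  set δ : ℝ≥0∞ := (k : ℝ≥0∞)⁻¹
  have hδ0 : δ ≠ 0 := ENNReal.inv_ne_zero.2 (ENNReal.natCast_ne_top k)
  have hδtop : δ ≠ ∞ := ENNReal.inv_ne_top.2 (by exact_mod_cast (by omega : k ≠ 0))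
  filter_upwards [hD.eventually_lt_const (ENNReal.mul_pos hε2 hδ0)] with i hi
  have hmarkov : μ ({x | δ ≤ h x} ∩ D i) < ε / 2 :=
    (Measure.le_restrict_apply _ _).trans_lt <|
      (meas_ge_le_lintegral_div hm.restrict hδ0 hδtop).trans_lt (ENNReal.div_lt_of_lt_mul hi)
  calc μ (D i) ≤ μ ({x | h x < δ} ∪ {x | δ ≤ h x} ∩ D i) :=
        measure_mono fun x hx => (lt_or_ge (h x) δ).imp id fun hle => ⟨hle, hx⟩
    _ ≤ μ {x | h x < δ} + μ ({x | δ ≤ h x} ∩ D i) := measure_union_le _ _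
    _ ≤ ε / 2 + ε / 2 := add_le_add hk.le hmarkov.le
    _ = ε := ENNReal.add_halves ε

end SetLIntegral

namespace IsBayesDecisionFunction

variable {𝒳 : Type*} [MeasurableSpace 𝒳] {P : Measure (𝒳 × Bool)} {η : 𝒳 → ℝ}

theorem abs_le_half (hη : IsBayesDecisionFunction P η) (x : 𝒳) : |η x| ≤ 1 / 2 :=
  _root_.abs_le.2 (hη.2.1 x)

theorem integrable_s8 [IsFiniteMeasure P] (hη : IsBayesDecisionFunction P η) :
    Integrable η (P.map Prod.fst) :=
  .of_bound hη.1.aestronglyMeasurable (1 / 2) (ae_of_all _ hη.abs_le_half)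

theorem measureReal_prod_false [IsFiniteMeasure P] (hη : IsBayesDecisionFunction P η)
    {A : Set 𝒳} (hA : MeasurableSet A) :
    P.real (A ×ˢ {false}) = ∫ x in A, (1 / 2 - η x) ∂(P.map Prod.fst) := by
  have hsplit : A ×ˢ {true} ∪ A ×ˢ {false} = Prod.fst ⁻¹' A := by
    rw [← Set.prod_union, ← Set.prod_univ]
    congr 1
    ext b; cases b <;> simp
  have hdisj : Disjoint (A ×ˢ ({true} : Set Bool)) (A ×ˢ {false}) :=
    Set.disjoint_prod.2 (Or.inr (by simp))
  have hA' : (P.map Prod.fst).real A = P.real (A ×ˢ {true}) + P.real (A ×ˢ {false}) := by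
    rw [map_measureReal_apply measurable_fst hA, ← hsplit,
      measureReal_union hdisj (hA.prod (measurableSet_singleton _))]
  have hsub : ∀ x, 1 / 2 - η x = 1 - (η x + 1 / 2) := fun x => by ring
  simp_rw [hsub]
  rw [integral_sub (g := fun x => η x + 1 / 2) (integrable_const _).integrableOn
      (hη.integrable_s8.add (integrable_const _)).integrableOn,
    setIntegral_const, smul_eq_mul, mul_one, hη.2.2 A hA, ← measureReal_def, hA']
  ring

theorem risk_eq_integral_s8 [IsFiniteMeasure P] (hη : IsBayesDecisionFunction P η)
    {g : 𝒳 → ℝ} (hg : Measurable g) :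
    risk P g = ∫ x, (if 0 < g x then 1 / 2 - η x else 1 / 2 + η x) ∂(P.map Prod.fst) := by
  classical
  set B : Set 𝒳 := {x | 0 < g x}
  have hB : MeasurableSet B := measurableSet_lt measurable_const hg
  have herr : {q : 𝒳 × Bool | (q.2 = true) ≠ (0 < g q.1)} = Bᶜ ×ˢ {true} ∪ B ×ˢ {false} := by
    ext ⟨x, b⟩
    cases b <;> simp [B]
  have hdisj : Disjoint (Bᶜ ×ˢ ({true} : Set Bool)) (B ×ˢ {false}) :=
    Set.disjoint_prod.2 (Or.inl disjoint_compl_left)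
  have hpiece : (fun x => if 0 < g x then 1 / 2 - η x else 1 / 2 + η x)
      = B.piecewise (fun x => 1 / 2 - η x) (fun x => 1 / 2 + η x) := by
    ext x; simp [Set.piecewise, B]
  have hint : Integrable (fun x => 1 / 2 + η x) (P.map Prod.fst) :=
    (integrable_const _).add hη.integrable_s8
  have hint' : Integrable (fun x => 1 / 2 - η x) (P.map Prod.fst) :=
    (integrable_const _).sub hη.integrable_s8
  rw [risk, ← measureReal_def, herr, measureReal_union hdisj (hB.prod (measurableSet_singleton _)),
    hpiece, integral_piecewise hB hint'.integrableOn hint.integrableOn,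
    measureReal_def P (Bᶜ ×ˢ {true}), ← hη.2.2 _ hB.compl, hη.measureReal_prod_false hB]
  simp_rw [add_comm (η _) (1 / 2 : ℝ)]
  ring

theorem risk_sub_risk_eq_setIntegral [IsFiniteMeasure P] (hη : IsBayesDecisionFunction P η)
    {g : 𝒳 → ℝ} (hg : Measurable g) :
    risk P g - risk P η
      = ∫ x in {x | (0 < g x) ≠ (0 < η x)}, 2 * |η x| ∂(P.map Prod.fst) := by
  have hint : ∀ {g : 𝒳 → ℝ}, Measurable g → Integrable
      (fun x => if 0 < g x then 1 / 2 - η x else 1 / 2 + η x) (P.map Prod.fst) := fun hg =>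
    .of_bound (((measurable_const.sub hη.1).ite (measurableSet_lt measurable_const hg)
      (measurable_const.add hη.1)).aestronglyMeasurable) 1 (ae_of_all _ fun x => by
        have := hη.abs_le_half x
        split_ifs <;> rw [Real.norm_eq_abs, _root_.abs_le] <;> constructor <;>
          linarith [_root_.abs_le.1 this])
  have hD : MeasurableSet {x | (0 < g x) ≠ (0 < η x)} := by
    simpa only [ne_eq, eq_iff_iff, Set.compl_ofPred] using
      ((measurableSet_lt measurable_const hg).iff (measurableSet_lt measurable_const hη.1)).compl
  rw [hη.risk_eq_integral_s8 hg, hη.risk_eq_integral_s8 hη.1, ← integral_sub (hint hg) (hint hη.1),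
    ← integral_indicator hD]
  congr 1 with x
  by_cases hgx : 0 < g x <;> by_cases hηx : 0 < η x <;>
    simp [hgx, hηx, abs_of_pos, abs_of_nonpos, le_of_not_gt] <;> ring

end IsBayesDecisionFunction

/-- Lemma 2: if P(η(X)=0) = 0 and R(f_n) → R*, then the induced rules converge
to the Bayes rule in probability: P(1_{f_n(X)>0} ≠ 1_{η(X)>0}) → 0. -/
theorem statement8 {𝒳 : Type*} [MeasurableSpace 𝒳]
    (P : Measure (𝒳 × Bool)) [IsProbabilityMeasure P]
    (η : 𝒳 → ℝ)
    (hη : IsBayesDecisionFunction P η)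
    (hη0 : P.map Prod.fst {x | η x = 0} = 0)
    (f : ℕ → 𝒳 → ℝ) (hf : ∀ n, Measurable (f n))
    (hrisk : Tendsto (fun n => risk P (f n)) atTop (nhds (risk P η))) :
    Tendsto (fun n => (P.map Prod.fst {x | (0 < f n x) ≠ (0 < η x)}).toReal)
      atTop (nhds 0) := by
  set μ := P.map Prod.fst
  have hexcess : Tendsto (fun n => ∫⁻ x in {x | (0 < f n x) ≠ (0 < η x)},
      ENNReal.ofReal (2 * |η x|) ∂μ) atTop (𝓝 0) := by
    have := ENNReal.tendsto_ofReal (hrisk.sub_const (risk P η))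
    rw [sub_self, ENNReal.ofReal_zero] at this
    refine this.congr fun n => ?_
    rw [hη.risk_sub_risk_eq_setIntegral (hf n), ofReal_integral_eq_lintegral_ofReal
      (hη.integrable_s8.abs.const_mul 2).integrableOn (ae_of_all _ fun x => by positivity)]
  have hpos : ∀ᵐ x ∂μ, ENNReal.ofReal (2 * |η x|) ≠ 0 := by
    have hne : ∀ᵐ x ∂μ, η x ≠ 0 := ae_iff.2 (by simpa only [ne_eq, not_not] using hη0)
    filter_upwards [hne] with x hx
    simpa using hx
  exact (ENNReal.tendsto_toReal ENNReal.zero_ne_top).comp <|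
    tendsto_measure_of_tendsto_setLIntegral
      (hη.1.abs.const_mul 2).ennreal_ofReal.aemeasurable hpos hexcess
end
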